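/- If n has only digits 0 and 1 in its base-3 expansion, then in the ring (ℤ/3[y]/(y^{n+1})) ⊗_{ℤ/3} (ℤ/3[y]/(y^{n+1})) the element (y⊗1 - 1⊗y)^{2n} is nonzero. -/

import Mathlib

open TensorProduct Polynomial

/-! By Lucas' theorem, `choose (2n) n ≡ ∏ᵢ choose (2nᵢ) nᵢ (mod 3)` over the base-3 digits `nᵢ`
of `n` (doubling `n` produces no carries), and each factor is `1` or `2`. The elements `y ⊗ 1`
and `1 ⊗ y` commute and have vanishing `(n+1)`-st powers, so the only surviving term in the
binomial expansion of `(y ⊗ 1 - 1 ⊗ y)^{2n}` is `(-1)ⁿ choose (2n) n · yⁿ ⊗ yⁿ`, and `yⁿ ⊗ yⁿ ≠ 0`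
because `yⁿ ≠ 0` over a field. -/

theorem natCast_centralBinom_ne_zero_of_two_mul_digit_lt {p : ℕ} [hp : Fact p.Prime] (n : ℕ)
    (hd : ∀ d ∈ p.digits n, 2 * d < p) : (n.centralBinom : ZMod p) ≠ 0 := by
  induction n using Nat.strong_induction_on with
  | _ n ih =>
  rcases Nat.eq_zero_or_pos n with rfl | hn
  · simp
  rw [Nat.digits_def' hp.out.one_lt hn] at hd
  have hlow : 2 * (n % p) < p := hd _ List.mem_cons_self
  have hdiv : 2 * n = 2 * (n % p) + p * (2 * (n / p)) := by
    have := Nat.mod_add_div n p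
    linarith
  have hmod : 2 * n % p = 2 * (n % p) := by
    rw [hdiv, Nat.add_mul_mod_self_left, Nat.mod_eq_of_lt hlow]
  have hquot : 2 * n / p = 2 * (n / p) := by
    rw [hdiv, Nat.add_mul_div_left _ _ hp.out.pos, Nat.div_eq_of_lt hlow, zero_add]
  have hlucas : (n.centralBinom : ZMod p)
      = ((2 * (n % p)).choose (n % p) : ℕ) * ((n / p).centralBinom : ℕ) := by
    rw [Nat.centralBinom_eq_two_mul_choose, Nat.centralBinom_eq_two_mul_choose, ← hmod, ← hquot,
      ← Nat.cast_mul, ZMod.natCast_eq_natCast_iff]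
    exact Choose.choose_modEq_choose_mod_mul_choose_div_nat
  rw [hlucas]
  refine mul_ne_zero ?_ (ih _ (Nat.div_lt_self hn hp.out.one_lt) fun d hd' ↦
    hd d (List.mem_cons_of_mem _ hd'))
  rw [Ne, ZMod.natCast_eq_zero_iff, ← hp.out.coprime_iff_not_dvd]
  exact hp.out.coprime_choose_of_lt hlow (by omega)

theorem add_pow_eq_choose_mul_pow_mul_pow {R : Type*} [CommSemiring R] {a b : R} {m n : ℕ}
    (ha : a ^ (m + 1) = 0) (hb : b ^ (n + 1) = 0) :
    (a + b) ^ (m + n) = (m + n).choose m * a ^ m * b ^ n := by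
  rw [add_pow, Finset.sum_eq_single m]
  · rw [Nat.add_sub_cancel_left, mul_right_comm, mul_comm _ ((m + n).choose m : R)]
  · intro k _ hkm
    rcases lt_or_gt_of_ne hkm with hlt | hgt
    · rw [pow_eq_zero_of_le (by omega) hb, mul_zero, zero_mul]
    · rw [pow_eq_zero_of_le hgt ha, zero_mul, zero_mul]
  · intro hm
    exact absurd (Finset.mem_range.mpr (by omega)) hm

theorem sub_pow_eq_choose_mul_pow_mul_pow {R : Type*} [CommRing R] {a b : R} {m n : ℕ}
    (ha : a ^ (m + 1) = 0) (hb : b ^ (n + 1) = 0) :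
    (a - b) ^ (m + n) = (-1) ^ n * (m + n).choose m * a ^ m * b ^ n := by
  rw [sub_eq_add_neg, add_pow_eq_choose_mul_pow_mul_pow ha (by rw [neg_pow, hb, mul_zero]),
    neg_pow]
  ring

theorem TensorProduct.tmul_ne_zero {R M N : Type*} [CommRing R] [IsDomain R] [AddCommGroup M] [Module R M]
    [AddCommGroup N] [Module R N] [Module.Projective R M] [Module.Projective R N]
    {m : M} {n : N} (hm : m ≠ 0) (hn : n ≠ 0) : m ⊗ₜ[R] n ≠ 0 := by
  obtain ⟨f, hf⟩ := Module.Projective.exists_dual_ne_zero R hm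
  obtain ⟨g, hg⟩ := Module.Projective.exists_dual_ne_zero R hn
  intro h
  have : TensorProduct.lid R R (TensorProduct.map f g (m ⊗ₜ[R] n)) = f m * g n := by
    rw [TensorProduct.map_tmul, TensorProduct.lid_tmul, smul_eq_mul]
  rw [h, map_zero, map_zero] at this
  exact mul_ne_zero hf hg this.symm

theorem mk_X_pow_ne_zero {R : Type*} [CommRing R] [Nontrivial R] (n : ℕ) :
    Ideal.Quotient.mk (Ideal.span {(X : R[X]) ^ (n + 1)}) (X ^ n) ≠ 0 := by
  rw [Ne, Ideal.Quotient.eq_zero_iff_mem, Ideal.mem_span_singleton, X_pow_dvd_iff, not_forall]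
  exact ⟨n, by simp⟩

theorem tmul_one_sub_one_tmul_pow_eq {K A : Type*} [CommRing K] [CommRing A] [Algebra K A]
    {y : A} {n : ℕ} (hy : y ^ (n + 1) = 0) :
    (y ⊗ₜ[K] (1 : A) - (1 : A) ⊗ₜ[K] y) ^ (2 * n)
      = ((-1) ^ n * n.centralBinom : K) • ((y ^ n) ⊗ₜ[K] (y ^ n)) := by
  have hy1 : (y ⊗ₜ[K] (1 : A)) ^ (n + 1) = 0 := by
    rw [Algebra.TensorProduct.tmul_pow, hy, zero_tmul]
  have h1y : ((1 : A) ⊗ₜ[K] y) ^ (n + 1) = 0 := by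
    rw [Algebra.TensorProduct.tmul_pow, hy, tmul_zero]
  rw [two_mul, sub_pow_eq_choose_mul_pow_mul_pow hy1 h1y, Algebra.TensorProduct.tmul_pow,
    Algebra.TensorProduct.tmul_pow, one_pow, mul_assoc, Algebra.TensorProduct.tmul_mul_tmul,
    mul_one, one_mul, ← two_mul, ← Nat.centralBinom_eq_two_mul_choose, Algebra.smul_def,
    map_mul, map_pow, map_neg, map_one, map_natCast]

theorem tmul_one_sub_one_tmul_pow_ne_zero {K A : Type*} [Field K] [CommRing A] [Algebra K A]
    {y : A} {n : ℕ} (hy : y ^ (n + 1) = 0) (hyn : y ^ n ≠ 0) (hc : (n.centralBinom : K) ≠ 0) :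
    (y ⊗ₜ[K] (1 : A) - (1 : A) ⊗ₜ[K] y) ^ (2 * n) ≠ 0 := by
  rw [tmul_one_sub_one_tmul_pow_eq hy]
  exact smul_ne_zero (mul_ne_zero (pow_ne_zero _ (neg_ne_zero.mpr one_ne_zero)) hc)
    (tmul_ne_zero hyn hyn)

set_option synthInstance.maxHeartbeats 1000000 in
theorem ybar_power_ne_zero_of_small_digits_general (n : ℕ)
    (hd : ∀ d ∈ Nat.digits 3 n, d = 0 ∨ d = 1) :
    let R := Polynomial (ZMod 3) ⧸ Ideal.span {(X : Polynomial (ZMod 3)) ^ (n + 1)}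
    let y : R := Ideal.Quotient.mk _ X
    (y ⊗ₜ[ZMod 3] (1 : R) - (1 : R) ⊗ₜ[ZMod 3] y) ^ (2 * n) ≠ 0 := by
  intro R y
  have hy : y ^ (n + 1) = 0 := by
    rw [← map_pow, Ideal.Quotient.eq_zero_iff_mem]
    exact Ideal.subset_span rfl
  have hyn : y ^ n ≠ 0 := by
    rw [← map_pow]
    exact mk_X_pow_ne_zero n
  refine tmul_one_sub_one_tmul_pow_ne_zero hy hyn
    (natCast_centralBinom_ne_zero_of_two_mul_digit_lt n fun d hdn ↦ ?_)
  rcases hd d hdn with rfl | rfl <;> norm_num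

set_option synthInstance.maxHeartbeats 1000000 in
/-- If `n` has only digits `0` and `1` in its base-3 expansion, then in
`(ℤ/3[y]/(y^{n+1})) ⊗_{ℤ/3} (ℤ/3[y]/(y^{n+1}))` the element `(y⊗1 - 1⊗y)^{2n}` is
nonzero. -/
theorem ybar_power_ne_zero_of_small_digits (n : ℕ) (hn : 0 < n)
    (hd : ∀ d ∈ Nat.digits 3 n, d = 0 ∨ d = 1) :
    let R := Polynomial (ZMod 3) ⧸ Ideal.span {(X : Polynomial (ZMod 3)) ^ (n + 1)}
    let y : R := Ideal.Quotient.mk _ X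
    (y ⊗ₜ[ZMod 3] (1 : R) - (1 : R) ⊗ₜ[ZMod 3] y) ^ (2 * n) ≠ 0 :=
  ybar_power_ne_zero_of_small_digits_general n hd
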